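/- arXiv:2410.07101 — 2 statements merged into one kernel-verified Lean document; each statement's English description precedes it below -/
import Mathlib

section
/- Let p ≥ 2 be a natural number. Let {G_j}_{j≥1} and {H_j}_{j≥1} be families of abelian groups indexed by the positive integers, and let f_j : G_j → H_j and g_j : G_j → H_{p·j} be group homomorphisms. Define h : ⨁_{j≥1} G_j → ⨁_{j≥1} H_j to be the homomorphism whose restriction to the summand G_j is x ↦ g_j(x) − f_j(x) (with g_j(x) landing in the summand H_{p·j} and f_j(x) in the summand H_j). If g_j is injective for every j ≥ 1, then h is injective. -/
open DirectSum

/-- Let `p ≥ 2`, `G, H` families of abelian groups indexed by the positive integers,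
`f j : G j →+ H j` and `g j : G j →+ H (p * j)` homomorphisms. If every `g j` is
injective, the map `⨁ G j → ⨁ H j` given on `G j` by `x ↦ g j x - f j x` is injective. -/
theorem ntc_direct_sum_injective_shift
    (p : ℕ+) (hp : 2 ≤ p)
    (G H : ℕ+ → Type*) [∀ j, AddCommGroup (G j)] [∀ j, AddCommGroup (H j)]
    (f : ∀ j, G j →+ H j) (g : ∀ j, G j →+ H (p * j))
    (hg : ∀ j, Function.Injective (g j)) :
    Function.Injective
      (DirectSum.toAddMonoid
        (fun j => ((DirectSum.of H (p * j)).comp (g j)) - ((DirectSum.of H j).comp (f j)) :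
          ∀ j, G j →+ ⨁ j, H j)) := by
  classical
  set F : ∀ j, G j →+ ⨁ j, H j :=
    (fun j => ((DirectSum.of H (p * j)).comp (g j)) - ((DirectSum.of H j).comp (f j))) with hF
  rw [injective_iff_map_eq_zero]
  intro x hx
  by_contra hne
  have hsupp : x.support.Nonempty :=
    Finset.nonempty_iff_ne_empty.mpr fun h => hne (DFinsupp.support_eq_empty.mp h)
  set j := x.support.max' hsupp with hj
  have hjmem : j ∈ x.support := x.support.max'_mem hsupp
  have hjmax : ∀ i ∈ x.support, i ≤ j := fun i hi => x.support.le_max' i hi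
  have hjlt : j < p * j := by
    have : (1 : ℕ+) < p := lt_of_lt_of_le (by norm_num) hp
    calc j = 1 * j := (one_mul j).symm
    _ < p * j := by exact mul_lt_mul_of_lt_of_le this le_rfl
  have hcomp : (DirectSum.toAddMonoid F x) (p * j) = g j (x j) := by
    conv_lhs => rw [← DirectSum.sum_support_of x, map_sum, DFinsupp.finset_sum_apply]
    simp only [DirectSum.toAddMonoid_of]
    rw [Finset.sum_eq_single j]
    · have hpne : j ≠ p * j := ne_of_lt hjlt
      simp [hF, DirectSum.of_apply, hpne]
    · intro i hi hij
      have h1 : p * i ≠ p * j := fun h => hij (mul_left_cancel h)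
      have h2 : i ≠ p * j := by
        intro h
        exact absurd (h ▸ hjmax i hi) (not_le.mpr hjlt)
      simp [hF, DirectSum.of_apply, h1, h2]
    · intro h
      exact absurd hjmem h
  rw [hx] at hcomp
  have : x j = 0 := hg j (by simpa using hcomp.symm)
  exact (DFinsupp.mem_support_iff.mp hjmem) this
end

section
/- Let R, B, C, D be commutative rings together with ring homomorphisms α : R → B, β : R → C, φ : B → D, ψ : C → D forming a commutative square (φ ∘ α = ψ ∘ β), such that ψ : C → D is surjective and the square is a Milnor square, i.e., the induced ring homomorphism R → B ×_D C, r ↦ (α(r), β(r)), is bijective onto the fiber product {(b,c) : φ(b) = ψ(c)}. Let A be a commutative R-algebra that is flat as an R-module. Then the base-changed square with corners A, A ⊗_R B, A ⊗_R C, A ⊗_R D (with the induced maps) is again a Milnor square: the map A ⊗_R C → A ⊗_R D is surjective and the induced map A → (A ⊗_R B) ×_{A ⊗_R D} (A ⊗_R C) is bijective. -/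
open scoped TensorProduct

/-- Flat base change of a Milnor square: if `R → B, R → C, B → D, C → D` is a Milnor
square (with `ψ : C → D` surjective) and `A` is a flat commutative `R`-algebra, then
the base-changed square `A, A ⊗[R] B, A ⊗[R] C, A ⊗[R] D` is again a Milnor square. -/
theorem milnor_square_flat_base_change
    (R A B C D : Type*) [CommRing R] [CommRing A] [CommRing B] [CommRing C] [CommRing D]
    [Algebra R A] [Algebra R B] [Algebra R C] [Algebra R D]
    [Module.Flat R A]
    (φ : B →ₐ[R] D) (ψ : C →ₐ[R] D)
    (hψ : Function.Surjective ψ)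
    (hmilnor : Function.Bijective
      (fun r : R =>
        (⟨(algebraMap R B r, algebraMap R C r), by simp [φ.commutes, ψ.commutes]⟩ :
          {x : B × C // φ x.1 = ψ x.2}))) :
    Function.Surjective (Algebra.TensorProduct.map (AlgHom.id R A) ψ) ∧
      Function.Bijective
        (fun a : A =>
          (⟨((Algebra.TensorProduct.includeLeft : A →ₐ[R] A ⊗[R] B) a,
             (Algebra.TensorProduct.includeLeft : A →ₐ[R] A ⊗[R] C) a), by simp⟩ :
            {x : (A ⊗[R] B) × (A ⊗[R] C) //
              Algebra.TensorProduct.map (AlgHom.id R A) φ x.1 =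
                Algebra.TensorProduct.map (AlgHom.id R A) ψ x.2})) := by
  classical
  -- linear-algebraic reformulation of the Milnor square
  set g : R →ₗ[R] B × C := LinearMap.prod (Algebra.linearMap R B) (Algebra.linearMap R C) with hg
  set f : B × C →ₗ[R] D :=
    φ.toLinearMap.comp (LinearMap.fst R B C) - ψ.toLinearMap.comp (LinearMap.snd R B C) with hf
  have hg_inj : Function.Injective g := by
    intro r r' h
    have : (⟨(algebraMap R B r, algebraMap R C r), by simp [φ.commutes, ψ.commutes]⟩ :
        {x : B × C // φ x.1 = ψ x.2}) =
        ⟨(algebraMap R B r', algebraMap R C r'), by simp [φ.commutes, ψ.commutes]⟩ := by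
      apply Subtype.ext
      simpa [hg, LinearMap.prod_apply, Prod.ext_iff] using h
    exact hmilnor.injective this
  have hf_surj : Function.Surjective f := by
    intro d
    obtain ⟨c, hc⟩ := hψ (-d)
    exact ⟨(0, c), by simp [hf, hc]⟩
  have hexact : Function.Exact g f := by
    intro x
    constructor
    · intro hx
      have hx' : φ x.1 = ψ x.2 := by
        have : φ x.1 - ψ x.2 = 0 := by simpa [hf] using hx
        exact sub_eq_zero.mp this
      obtain ⟨r, hr⟩ := hmilnor.surjective ⟨(x.1, x.2), hx'⟩
      refine ⟨r, ?_⟩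
      have := congrArg Subtype.val hr
      simp only [hg, LinearMap.prod_apply]
      exact Prod.ext (congrArg Prod.fst this) (congrArg Prod.snd this)
    · rintro ⟨r, rfl⟩
      simp [hf, hg, φ.commutes, ψ.commutes]
  -- tensor with A
  have hinj2 : Function.Injective (g.lTensor A) :=
    Module.Flat.lTensor_preserves_injective_linearMap g hg_inj
  have hexact2 : Function.Exact (g.lTensor A) (f.lTensor A) :=
    Module.Flat.lTensor_exact A hexact
  set e := TensorProduct.prodRight R R A B C with he
  set eR := TensorProduct.rid R A with heR
  -- identify the algebra maps with lTensor maps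
  have hφeq : ∀ x : A ⊗[R] B,
      Algebra.TensorProduct.map (AlgHom.id R A) φ x = φ.toLinearMap.lTensor A x := by
    intro x
    induction x using TensorProduct.induction_on with
    | zero => simp
    | tmul a b => simp
    | add x y hx hy => simp [map_add, hx, hy]
  have hψeq : ∀ x : A ⊗[R] C,
      Algebra.TensorProduct.map (AlgHom.id R A) ψ x = ψ.toLinearMap.lTensor A x := by
    intro x
    induction x using TensorProduct.induction_on with
    | zero => simp
    | tmul a c => simp
    | add x y hx hy => simp [map_add, hx, hy]
  -- f.lTensor under the product identification
  have hfe : ∀ z : A ⊗[R] (B × C),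
      f.lTensor A z = φ.toLinearMap.lTensor A (e z).1 - ψ.toLinearMap.lTensor A (e z).2 := by
    intro z
    induction z using TensorProduct.induction_on with
    | zero => simp
    | tmul a bc =>
        obtain ⟨b, c⟩ := bc
        simp [hf, he, TensorProduct.tmul_sub]
    | add x y hx hy => simp only [map_add, Prod.fst_add, Prod.snd_add, hx, hy]; ring
  -- g.lTensor under the identifications
  have hge : ∀ a : A, e (g.lTensor A (eR.symm a)) = ((a ⊗ₜ[R] 1 : A ⊗[R] B), (a ⊗ₜ[R] 1 : A ⊗[R] C)) := by
    intro a
    simp only [hg, heR, he, TensorProduct.rid_symm_apply, LinearMap.lTensor_tmul,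
      LinearMap.prod_apply, Pi.prod, map_one]
    rw [TensorProduct.prodRight_tmul]
    simp
  constructor
  · -- surjectivity of A ⊗ ψ
    intro x
    induction x using TensorProduct.induction_on with
    | zero => exact ⟨0, by simp⟩
    | tmul a d =>
        obtain ⟨c, hc⟩ := hψ d
        exact ⟨a ⊗ₜ c, by simp [hc]⟩
    | add x y hx hy =>
        obtain ⟨u, hu⟩ := hx
        obtain ⟨v, hv⟩ := hy
        exact ⟨u + v, by simp [hu, hv]⟩
  · constructor
    · -- injectivity
      intro a a' h
      have h' : (a ⊗ₜ[R] (1 : B), a ⊗ₜ[R] (1 : C)) = (a' ⊗ₜ[R] (1 : B), a' ⊗ₜ[R] (1 : C)) := by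
        have := congrArg Subtype.val h
        simpa using this
      have h2 : e (g.lTensor A (eR.symm a)) = e (g.lTensor A (eR.symm a')) := by
        rw [hge a, hge a', h']
      exact eR.symm.injective (hinj2 (e.injective h2))
    · -- surjectivity
      rintro ⟨⟨x, y⟩, hxy⟩
      have hker : f.lTensor A (e.symm (x, y)) = 0 := by
        rw [hfe]
        simp only [LinearEquiv.apply_symm_apply]
        rw [← hφeq, ← hψeq, hxy, sub_self]
      obtain ⟨t, ht⟩ := (hexact2 (e.symm (x, y))).mp hker
      refine ⟨eR t, ?_⟩
      apply Subtype.ext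
      have : e (g.lTensor A (eR.symm (eR t))) = (x, y) := by
        rw [LinearEquiv.symm_apply_apply, ht, LinearEquiv.apply_symm_apply]
      rw [hge (eR t)] at this
      simpa using this
end
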